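/- Let ρ̄₀, ρ̄₁ ∈ M₊(Ω), ρ ∈ M₊([0,1]×Ω) and m ∈ M([0,1]×Ω;ℝ^d) with (ρ,m) ∈ CE(ρ̄₀,ρ̄₁). Then ρ̄₀(Ω) = ρ̄₁(Ω), and the pushforward of ρ under the projection (t,x) ↦ t equals ρ̄₀(Ω) times the Lebesgue measure on [0,1]. -/

import Mathlib

open MeasureTheory Set Filter Topology
open scoped ENNReal NNReal

noncomputable section

abbrev Euc (d : ℕ) : Type := EuclideanSpace ℝ (Fin d)

/-- Integral of a function against a finite signed measure. -/
def sInt {X : Type*} [MeasurableSpace X] (ν : SignedMeasure X) (f : X → ℝ) : ℝ :=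
  (∫ x, f x ∂ν.toJordanDecomposition.posPart) - ∫ x, f x ∂ν.toJordanDecomposition.negPart

/-- Total variation norm of a finite signed measure. -/
def sTV {X : Type*} [MeasurableSpace X] (ν : SignedMeasure X) : ℝ :=
  (ν.totalVariation Set.univ).toReal

/-- Pairing of an `ℝ^d`-valued measure (given componentwise) with a vector field. -/
def vInt {X : Type*} [MeasurableSpace X] {d : ℕ} (m : Fin d → SignedMeasure X)
    (b : X → Euc d) : ℝ :=
  ∑ i, sInt (m i) fun x => b x i

/-- Total variation norm of a vector measure, via duality with continuous fields. -/
def vTV {X : Type*} [MeasurableSpace X] [TopologicalSpace X] {d : ℕ}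
    (m : Fin d → SignedMeasure X) : ℝ :=
  ⨆ b : {b : C(X, Euc d) // ∀ x, ‖b x‖ ≤ 1}, vInt m fun x => (b : C(X, Euc d)) x

/-- The Benamou-Brenier action. -/
def actionBB {X : Type*} [MeasurableSpace X] [TopologicalSpace X] {d : ℕ}
    (ρ : SignedMeasure X) (m : Fin d → SignedMeasure X) : ℝ≥0∞ :=
  ⨆ p : {q : C(X, ℝ) × C(X, Euc d) // ∀ x, q.1 x + ‖q.2 x‖ ^ 2 / 2 ≤ 0},
    ENNReal.ofReal (sInt ρ (p : C(X, ℝ) × C(X, Euc d)).1 + vInt m (p : C(X, ℝ) × C(X, Euc d)).2)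

/-- The space-time domain `[0,1] × Ω`. -/
abbrev STt (d : ℕ) (Ω : Set (Euc d)) : Type := ↥(Icc (0:ℝ) 1) × ↥Ω

def STemb {d : ℕ} {Ω : Set (Euc d)} (p : STt d Ω) : ℝ × Euc d := ((p.1 : ℝ), (p.2 : Euc d))

/-- The (weak formulation of the) continuity equation with temporal boundary data `ρ₀, ρ₁`. -/
def CEeq (d : ℕ) (Ω : Set (Euc d)) (ρ₀ ρ₁ : SignedMeasure ↥Ω)
    (ρ : SignedMeasure (STt d Ω)) (m : Fin d → SignedMeasure (STt d Ω)) : Prop :=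
  ∀ φ : ℝ × Euc d → ℝ, ContDiff ℝ 1 φ →
    sInt ρ (fun p => fderiv ℝ φ (STemb p) (1, 0)) +
      ∑ i, sInt (m i) (fun p => fderiv ℝ φ (STemb p) (0, EuclideanSpace.single i 1)) =
    sInt ρ₁ (fun x => φ (1, (x : Euc d))) - sInt ρ₀ (fun x => φ (0, (x : Euc d)))

open scoped Classical in
/-- The functional `J_{ρ₀,ρ₁}`. -/
def Jfun (d : ℕ) (Ω : Set (Euc d)) (ρ₀ ρ₁ : SignedMeasure ↥Ω)
    (ρ : SignedMeasure (STt d Ω)) (m : Fin d → SignedMeasure (STt d Ω)) : ℝ≥0∞ :=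
  if CEeq d Ω ρ₀ ρ₁ ρ m then actionBB ρ m else ⊤

/-- The quadratic Wasserstein distance. -/
def W2 {d : ℕ} {Ω : Set (Euc d)} (μ ν : Measure ↥Ω) : ℝ :=
  Real.sqrt (sInf {c : ℝ | ∃ π : Measure (↥Ω × ↥Ω), IsFiniteMeasure π ∧
    π.map Prod.fst = μ ∧ π.map Prod.snd = ν ∧
    c = ∫ p, ‖(p.1 : Euc d) - (p.2 : Euc d)‖ ^ 2 ∂π})

/-!
Testing the continuity equation with `φ (t, x) = f t` kills the flux term and leaves
`∫ f'(t) dρ = f 1 · ρ̄₁(Ω) - f 0 · ρ̄₀(Ω)`. For `f ≡ 1` this says that the masses agree. Every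
continuous `g` on `[0, 1]` is the derivative of a `C¹` function (a primitive of its continuous
extension to `ℝ`), so the identity pins down `∫ g d(ρ ∘ π_t⁻¹)` as `ρ̄₀(Ω) ∫₀¹ g`.
-/

namespace MeasureTheory

theorem Measure.toSignedMeasure_toJordanDecomposition {X : Type*} [MeasurableSpace X]
    (μ : Measure X) [IsFiniteMeasure μ] :
    μ.toSignedMeasure.toJordanDecomposition = ⟨μ, 0, .zero_right⟩ := by
  rw [← JordanDecomposition.toJordanDecomposition_toSignedMeasure ⟨μ, 0, .zero_right⟩]
  congr 1
  simp [JordanDecomposition.toSignedMeasure]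

end MeasureTheory

theorem sInt_toSignedMeasure {X : Type*} [MeasurableSpace X] (μ : Measure X) [IsFiniteMeasure μ]
    (f : X → ℝ) : sInt μ.toSignedMeasure f = ∫ x, f x ∂μ := by
  simp [sInt, Measure.toSignedMeasure_toJordanDecomposition]

theorem sInt_zero {X : Type*} [MeasurableSpace X] (ν : SignedMeasure X) :
    sInt ν (fun _ => 0) = 0 := by
  simp [sInt]

theorem fderiv_comp_fst_apply {E : Type*} [NormedAddCommGroup E] [NormedSpace ℝ E]
    {f : ℝ → ℝ} {p : ℝ × E} (hf : DifferentiableAt ℝ f p.1) (v : ℝ × E) :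
    fderiv ℝ (fun q : ℝ × E => f q.1) p v = v.1 * deriv f p.1 := by
  have h : HasFDerivAt (fun q : ℝ × E => f q.1) _ p :=
    hf.hasDerivAt.hasFDerivAt.comp p hasFDerivAt_fst
  rw [h.fderiv]
  simp

theorem Continuous.contDiff_one_intervalIntegral {g : ℝ → ℝ} (hg : Continuous g) (a : ℝ) :
    ContDiff ℝ 1 (fun t => ∫ x in a..t, g x) := by
  have hderiv : deriv (fun t => ∫ x in a..t, g x) = g := funext (hg.deriv_integral g a)
  refine contDiff_one_iff_deriv.2 ⟨fun t => ?_, by rw [hderiv]; exact hg⟩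
  exact (hg.integral_hasStrictDerivAt a t).hasDerivAt.differentiableAt

instance isFiniteMeasure_comap_volume_Icc (a b : ℝ) :
    IsFiniteMeasure (Measure.comap Subtype.val volume : Measure ↥(Icc a b)) where
  measure_univ_lt_top := by
    rw [comap_subtype_coe_apply measurableSet_Icc, image_univ, Subtype.range_coe]
    exact measure_Icc_lt_top

theorem eq_smul_comap_volume_Icc_of_integral_deriv {a b : ℝ} (hab : a ≤ b)
    (μ : Measure ↥(Icc a b)) [IsFiniteMeasure μ] {c : ℝ≥0∞} (hc : c ≠ ∞)
    (h : ∀ f : ℝ → ℝ, ContDiff ℝ 1 f → ∫ t, deriv f t ∂μ = c.toReal * (f b - f a)) :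
    μ = c • (Measure.comap Subtype.val volume : Measure ↥(Icc a b)) := by
  have : IsFiniteMeasure (c • (Measure.comap Subtype.val volume : Measure ↥(Icc a b))) :=
    ⟨ENNReal.mul_lt_top hc.lt_top (measure_lt_top _ _)⟩
  refine ext_of_forall_integral_eq_of_IsFiniteMeasure fun g => ?_
  set G : ℝ → ℝ := IccExtend hab g
  have hG : Continuous G := g.continuous.Icc_extend'
  have hGg : ∀ t : Icc a b, G t = g t := IccExtend_val hab g
  have hprim := h _ (hG.contDiff_one_intervalIntegral a)
  simp only [hG.deriv_integral, hGg, intervalIntegral.integral_same, sub_zero] at hprim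
  rw [hprim, integral_smul_measure, smul_eq_mul, intervalIntegral.integral_of_le hab,
    ← integral_Icc_eq_integral_Ioc, ← integral_subtype_comap measurableSet_Icc]
  simp only [hGg]

section ContinuityEquation

variable {d : ℕ} {Ω : Set (Euc d)} {ρ₀ ρ₁ : Measure ↥Ω} [IsFiniteMeasure ρ₀] [IsFiniteMeasure ρ₁]
  {ρ : Measure (STt d Ω)} [IsFiniteMeasure ρ] {m : Fin d → SignedMeasure (STt d Ω)}

theorem CEeq.integral_deriv_comp_fst
    (hce : CEeq d Ω ρ₀.toSignedMeasure ρ₁.toSignedMeasure ρ.toSignedMeasure m)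
    {f : ℝ → ℝ} (hf : ContDiff ℝ 1 f) :
    ∫ p, deriv f p.1 ∂ρ = f 1 * ρ₁.real univ - f 0 * ρ₀.real univ := by
  have hdf : ∀ p : STt d Ω, DifferentiableAt ℝ f (STemb p).1 :=
    fun _ => hf.differentiable one_ne_zero _
  have h := hce (fun q => f q.1) (hf.comp contDiff_fst)
  simp only [fderiv_comp_fst_apply (hdf _), zero_mul, one_mul, sInt_zero, Finset.sum_const_zero,
    add_zero, sInt_toSignedMeasure, integral_const, smul_eq_mul] at h
  simpa [STemb, mul_comm] using h

theorem CEeq.measure_univ_eq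
    (hce : CEeq d Ω ρ₀.toSignedMeasure ρ₁.toSignedMeasure ρ.toSignedMeasure m) :
    ρ₀ univ = ρ₁ univ := by
  have h := hce.integral_deriv_comp_fst (f := fun _ => 1) contDiff_const
  simp only [deriv_const', integral_zero, one_mul] at h
  exact (ENNReal.toReal_eq_toReal_iff' (measure_ne_top _ _) (measure_ne_top _ _)).1
    (sub_eq_zero.1 h.symm).symm

theorem CEeq.map_fst_eq
    (hce : CEeq d Ω ρ₀.toSignedMeasure ρ₁.toSignedMeasure ρ.toSignedMeasure m) :
    ρ.map Prod.fst = ρ₀ univ • (Measure.comap Subtype.val volume : Measure ↥(Icc (0:ℝ) 1)) := by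
  refine eq_smul_comap_volume_Icc_of_integral_deriv zero_le_one _ (measure_ne_top _ _)
    fun f hf => ?_
  have hcont : Continuous fun t : Icc (0:ℝ) 1 => deriv f t :=
    (hf.continuous_deriv le_rfl).comp continuous_subtype_val
  rw [integral_map measurable_fst.aemeasurable hcont.aestronglyMeasurable,
    hce.integral_deriv_comp_fst hf]
  simp only [Measure.real, ← hce.measure_univ_eq]
  ring

end ContinuityEquation

theorem stmt14_general {d : ℕ} (Ω : Set (Euc d))
    (ρb₀ ρb₁ : Measure ↥Ω) [IsFiniteMeasure ρb₀] [IsFiniteMeasure ρb₁]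
    (ρ : Measure (STt d Ω)) [IsFiniteMeasure ρ]
    (m : Fin d → SignedMeasure (STt d Ω))
    (hce : CEeq d Ω ρb₀.toSignedMeasure ρb₁.toSignedMeasure ρ.toSignedMeasure m) :
    ρb₀ Set.univ = ρb₁ Set.univ ∧
      ρ.map Prod.fst = (ρb₀ Set.univ) • (Measure.comap Subtype.val volume :
        Measure ↥(Icc (0:ℝ) 1)) :=
  ⟨hce.measure_univ_eq, hce.map_fst_eq⟩

/-- If `(ρ, m) ∈ CE(ρ̄₀, ρ̄₁)` with `ρ` nonnegative, then `ρ̄₀` and `ρ̄₁` have the same total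
mass, and the temporal marginal of `ρ` is that common mass times the Lebesgue measure
on `[0,1]`. -/
theorem stmt14 {d : ℕ} (hd : 1 ≤ d) (Ω : Set (Euc d)) (hne : Ω.Nonempty)
    (hcomp : IsCompact Ω) (hconv : Convex ℝ Ω)
    (ρb₀ ρb₁ : Measure ↥Ω) [IsFiniteMeasure ρb₀] [IsFiniteMeasure ρb₁]
    (ρ : Measure (STt d Ω)) [IsFiniteMeasure ρ]
    (m : Fin d → SignedMeasure (STt d Ω))
    (hce : CEeq d Ω ρb₀.toSignedMeasure ρb₁.toSignedMeasure ρ.toSignedMeasure m) :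
    ρb₀ Set.univ = ρb₁ Set.univ ∧
      ρ.map Prod.fst = (ρb₀ Set.univ) • (Measure.comap Subtype.val volume :
        Measure ↥(Icc (0:ℝ) 1)) :=
  stmt14_general Ω ρb₀ ρb₁ ρ m hce

end
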